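/- Let ε be a real number with 0 ≤ ε ≤ 1/6 and define f_ε : ℕ → [0,1] by f_ε(0) = 1, f_ε(1) = 1−ε, f_ε(2) = min{3/5, 1/2+ε}, and f_ε(d) = min{2/(d+1), 1/d+ε} for d ≥ 3. Then f_ε is an extremal lower bound for α_𝓢: there is no function g : ℕ → [0,1] with g not identically 0 such that α_𝓢(G) ≥ ∑_{v ∈ V(G)} (f_ε + g)(d(v)) holds for every graph G. -/

import Mathlib

/-- A graph is a forest of stars iff every edge has an endpoint of degree exactly 1
(equivalently, every connected component is a star; a single vertex counts as a star). -/
def IsStarForest {α : Type*} (H : SimpleGraph α) : Prop :=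
  ∀ ⦃v w⦄, H.Adj v w → (H.neighborSet v).ncard = 1 ∨ (H.neighborSet w).ncard = 1

/-- The lower-bound function f_ε for forests of stars. -/
noncomputable def fS (ε : ℝ) (d : ℕ) : ℝ :=
  if d = 0 then 1
  else if d = 1 then 1 - ε
  else if d = 2 then min (3/5) (1/2 + ε)
  else min (2 / ((d : ℝ) + 1)) (1 / (d : ℝ) + ε)

open Finset SimpleGraph

section Aux

lemma two_nbrs {α : Type*} (H : SimpleGraph α) {v a b : α} (hab : a ≠ b)
    (ha : H.Adj v a) (hb : H.Adj v b) : (H.neighborSet v).ncard ≠ 1 := by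
  intro h
  obtain ⟨x, hx⟩ := Set.ncard_eq_one.mp h
  have ha' : a ∈ H.neighborSet v := ha
  have hb' : b ∈ H.neighborSet v := hb
  rw [hx] at ha' hb'
  exact hab (ha'.trans hb'.symm)

lemma no_bad_edge {V : Type*} (G : SimpleGraph V) (S : Set V)
    (h : IsStarForest (G.induce S)) {a b c e : V} (ha : a ∈ S) (hb : b ∈ S) (hc : c ∈ S)
    (he : e ∈ S) (hab : G.Adj a b) (hac : G.Adj a c) (hbe : G.Adj b e)
    (hbc : b ≠ c) (hae : a ≠ e) : False := by
  have hadj : (G.induce S).Adj ⟨a, ha⟩ ⟨b, hb⟩ := hab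
  have hadj2 : (G.induce S).Adj ⟨a, ha⟩ ⟨c, hc⟩ := hac
  have hadj3 : (G.induce S).Adj ⟨b, hb⟩ ⟨e, he⟩ := hbe
  rcases h hadj with h1 | h1
  · exact two_nbrs _ (fun hh => hbc (congrArg Subtype.val hh)) hadj hadj2 h1
  · exact two_nbrs _ (fun hh => hae (congrArg Subtype.val hh))
      ((G.induce S).adj_symm hadj) hadj3 h1

/-- The pendant-clique graph: a clique on `Fin d` (vertices `(i, false)`), with a pendant
vertex `(i, true)` attached to each clique vertex. -/
def PC (d : ℕ) : SimpleGraph (Fin d × Bool) where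
  Adj v w := v ≠ w ∧ ((v.2 = false ∧ w.2 = false) ∨ v.1 = w.1)
  symm := by
    constructor
    rintro v w ⟨h1, h2⟩
    exact ⟨h1.symm, h2.imp (fun h => ⟨h.2, h.1⟩) Eq.symm⟩
  loopless := by constructor; rintro v ⟨h, -⟩; exact h rfl

instance PCdec (d : ℕ) : DecidableRel (PC d).Adj := fun v w =>
  inferInstanceAs (Decidable (v ≠ w ∧ ((v.2 = false ∧ w.2 = false) ∨ v.1 = w.1)))

lemma PC_adj {d : ℕ} {v w : Fin d × Bool} :
    (PC d).Adj v w ↔ v ≠ w ∧ ((v.2 = false ∧ w.2 = false) ∨ v.1 = w.1) := Iff.rfl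

lemma PC_nbr_pendant (d : ℕ) (i : Fin d) :
    (PC d).neighborFinset (i, true) = {(i, false)} := by
  ext ⟨j, c⟩
  simp only [mem_neighborFinset, PC_adj, Finset.mem_singleton, Prod.mk.injEq, Ne, Prod.ext_iff]
  cases c <;> simp <;> tauto

lemma PC_degree_pendant (d : ℕ) (i : Fin d) : (PC d).degree (i, true) = 1 := by
  rw [← card_neighborFinset_eq_degree, PC_nbr_pendant]; simp

lemma PC_nbr_clique (d : ℕ) (i : Fin d) :
    (PC d).neighborFinset (i, false) =
      ((univ.erase i).image (fun j => (j, false))) ∪ {(i, true)} := by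
  ext ⟨j, c⟩
  simp only [mem_neighborFinset, PC_adj, Finset.mem_union, Finset.mem_image, Finset.mem_erase,
    Finset.mem_singleton, Prod.mk.injEq, Ne, Prod.ext_iff, Finset.mem_univ]
  cases c <;> simp <;> tauto

lemma PC_degree_clique (d : ℕ) (i : Fin d) : (PC d).degree (i, false) = d := by
  rw [← card_neighborFinset_eq_degree, PC_nbr_clique, Finset.card_union_of_disjoint,
    Finset.card_image_of_injective, Finset.card_erase_of_mem (mem_univ i)]
  · simp only [Finset.card_singleton, card_univ, Fintype.card_fin]
    have := i.pos
    omega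
  · exact fun a b h => by simpa using h
  · simp [Finset.disjoint_left]

lemma PC_bound {d : ℕ} (S : Finset (Fin d × Bool))
    (h : IsStarForest ((PC d).induce (S : Set (Fin d × Bool)))) : S.card ≤ d + 1 := by
  classical
  by_contra hcon
  push_neg at hcon
  set C := S.filter (fun v => v.2 = false) with hC
  set P := S.filter (fun v => ¬ v.2 = false) with hP
  have hpart : C.card + P.card = S.card := Finset.card_filter_add_card_filter_not _
  have hPd : P.card ≤ d := by
    have := Finset.card_le_card_of_injOn (s := P) (f := Prod.fst) (t := (univ : Finset (Fin d)))
      (fun a _ => mem_univ _)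
      (fun a haa b hbb hfst => by
        have ha2 : a.2 = true := by simpa using (Finset.mem_filter.mp haa).2
        have hb2 : b.2 = true := by simpa using (Finset.mem_filter.mp hbb).2
        exact Prod.ext hfst (ha2.trans hb2.symm))
    simpa using this
  have hC2 : 2 ≤ C.card := by omega
  rcases Nat.lt_or_ge C.card 3 with h3 | h3
  · -- C.card = 2
    have : C.card = 2 := by omega
    obtain ⟨x, y, hxy, hCxy⟩ := Finset.card_eq_two.mp this
    have hxC : x ∈ C := by rw [hCxy]; simp
    have hyC : y ∈ C := by rw [hCxy]; simp
    have hxS : x ∈ S := (Finset.mem_filter.mp hxC).1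
    have hyS : y ∈ S := (Finset.mem_filter.mp hyC).1
    have hx2 : x.2 = false := (Finset.mem_filter.mp hxC).2
    have hy2 : y.2 = false := (Finset.mem_filter.mp hyC).2
    have hxy1 : x.1 ≠ y.1 := fun hh => hxy (Prod.ext hh (hx2.trans hy2.symm))
    have hadjxy : (PC d).Adj x y := ⟨hxy, Or.inl ⟨hx2, hy2⟩⟩
    have key : ∀ i : Fin d, (i, true) ∉ S → False := by
      intro i hi
      have hPd1 : P.card ≤ d - 1 := by
        have := Finset.card_le_card_of_injOn (s := P) (f := Prod.fst) (t := (univ.erase i))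
          (fun a haa => by
            have ha2 : a.2 = true := by simpa using (Finset.mem_filter.mp haa).2
            have haS : a ∈ S := (Finset.mem_filter.mp haa).1
            refine Finset.mem_erase.mpr ⟨fun hh => hi ?_, mem_univ _⟩
            have ha' : a = (i, true) := Prod.ext_iff.mpr ⟨hh, ha2⟩
            exact ha' ▸ haS)
          (fun a haa b hbb hfst => by
            have ha2 : a.2 = true := by simpa using (Finset.mem_filter.mp haa).2
            have hb2 : b.2 = true := by simpa using (Finset.mem_filter.mp hbb).2
            exact Prod.ext hfst (ha2.trans hb2.symm))
        have := this.trans (le_of_eq (Finset.card_erase_of_mem (mem_univ i)))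
        simpa using this
      omega
    have hd1 : 1 ≤ d := x.1.pos
    by_cases hx' : (x.1, true) ∈ S
    · by_cases hy' : (y.1, true) ∈ S
      · exact no_bad_edge (PC d) _ h hxS hyS hx' hy' hadjxy
          ⟨fun hh => by have h2 := congrArg Prod.snd hh; simp [hx2] at h2, Or.inr rfl⟩
          ⟨fun hh => by have h2 := congrArg Prod.snd hh; simp [hy2] at h2, Or.inr rfl⟩
          (fun hh => by have h2 := congrArg Prod.snd hh; simp [hy2] at h2)
          (fun hh => by have h2 := congrArg Prod.snd hh; simp [hx2] at h2)
      · exact key y.1 hy'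
    · exact key x.1 hx'
  · -- three clique vertices: triangle, impossible
    obtain ⟨a, b, c, haC, hbC, hcC, hab, hac, hbc⟩ := Finset.two_lt_card_iff.mp h3
    have ha2 : a.2 = false := (Finset.mem_filter.mp haC).2
    have hb2 : b.2 = false := (Finset.mem_filter.mp hbC).2
    have hc2 : c.2 = false := (Finset.mem_filter.mp hcC).2
    exact no_bad_edge (PC d) _ h
      (Finset.mem_coe.mpr (Finset.mem_filter.mp haC).1)
      (Finset.mem_coe.mpr (Finset.mem_filter.mp hbC).1)
      (Finset.mem_coe.mpr (Finset.mem_filter.mp hcC).1)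
      (Finset.mem_coe.mpr (Finset.mem_filter.mp hcC).1)
      ⟨hab, Or.inl ⟨ha2, hb2⟩⟩ ⟨hac, Or.inl ⟨ha2, hc2⟩⟩ ⟨hbc, Or.inl ⟨hb2, hc2⟩⟩
      hbc hac

lemma K_bound {n : ℕ} (S : Finset (Fin n))
    (h : IsStarForest ((⊤ : SimpleGraph (Fin n)).induce (S : Set (Fin n)))) : S.card ≤ 2 := by
  by_contra hcon
  push_neg at hcon
  obtain ⟨a, b, c, haS, hbS, hcS, hab, hac, hbc⟩ := Finset.two_lt_card_iff.mp hcon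
  exact no_bad_edge _ _ h (Finset.mem_coe.mpr haS) (Finset.mem_coe.mpr hbS)
    (Finset.mem_coe.mpr hcS) (Finset.mem_coe.mpr hcS) hab hac hbc hbc hac

/-- The 5-cycle on `ZMod 5`. -/
def C5 : SimpleGraph (ZMod 5) where
  Adj v w := w = v + 1 ∨ v = w + 1
  symm := ⟨fun _ _ h => h.symm⟩
  loopless := ⟨fun v h => by
    rcases h with h | h <;> exact absurd (left_eq_add.mp h) (by decide)⟩

instance C5dec : DecidableRel C5.Adj := fun v w =>
  inferInstanceAs (Decidable (w = v + 1 ∨ v = w + 1))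

lemma C5_adj {v w : ZMod 5} : C5.Adj v w ↔ (w = v + 1 ∨ v = w + 1) := Iff.rfl

lemma C5_nbr (v : ZMod 5) : C5.neighborFinset v = {v + 1, v + 4} := by
  have key : ∀ v w : ZMod 5, (w = v + 1 ∨ v = w + 1) ↔ (w = v + 1 ∨ w = v + 4) := by decide
  ext w
  simp only [mem_neighborFinset, C5_adj, Finset.mem_insert, Finset.mem_singleton, key]

lemma C5_degree (v : ZMod 5) : C5.degree v = 2 := by
  rw [← card_neighborFinset_eq_degree, C5_nbr]
  rw [Finset.card_insert_of_notMem (by simpa using (by decide : ∀ u : ZMod 5, u + 1 ≠ u + 4) v)]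
  simp

lemma C5_bound (S : Finset (ZMod 5))
    (h : IsStarForest (C5.induce (S : Set (ZMod 5)))) : S.card ≤ 3 := by
  by_contra hcon
  push_neg at hcon
  have hcompl : Sᶜ.card ≤ 1 := by
    have := Finset.card_compl S
    have h5 : Fintype.card (ZMod 5) = 5 := by decide
    omega
  have hkey : ∃ m : ZMod 5, ∀ x : ZMod 5, x ≠ m → x ∈ S := by
    rcases Finset.eq_empty_or_nonempty Sᶜ with he | ⟨m, hm⟩
    · exact ⟨0, fun x _ => by
        by_contra hx
        exact Finset.notMem_empty x (he ▸ Finset.mem_compl.mpr hx)⟩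
    · refine ⟨m, fun x hx => ?_⟩
      by_contra hxS
      have hx' : x ∈ Sᶜ := Finset.mem_compl.mpr hxS
      exact hx (Finset.card_le_one.mp hcompl x hx' m hm)
  obtain ⟨m, hm⟩ := hkey
  have hne : ∀ k : ZMod 5, k ≠ 0 → m + k ≠ m := by
    intro k hk he
    exact hk (by linear_combination he)
  have hd : ∀ k l : ZMod 5, k ≠ l → m + k ≠ m + l := by
    intro k l hkl he
    exact hkl (by linear_combination he)
  exact no_bad_edge C5 _ h
    (Finset.mem_coe.mpr (hm _ (hne 2 (by decide)))) (Finset.mem_coe.mpr (hm _ (hne 3 (by decide))))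
    (Finset.mem_coe.mpr (hm _ (hne 1 (by decide)))) (Finset.mem_coe.mpr (hm _ (hne 4 (by decide))))
    (C5_adj.mpr (Or.inl (by ring))) (C5_adj.mpr (Or.inr (by ring))) (C5_adj.mpr (Or.inl (by ring)))
    (hd 3 1 (by decide)) (hd 2 4 (by decide))

end Aux

/-- For 0 ≤ ε ≤ 1/6, the lower bound f_ε for induced forests of stars is extremal:
no nonzero g : ℕ → [0,1] can be added to f_ε while keeping a valid lower bound. -/
theorem stmt7 (ε : ℝ) (hε0 : 0 ≤ ε) (hε1 : ε ≤ 1/6) :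
    ¬ ∃ g : ℕ → ℝ, (∀ d, 0 ≤ g d ∧ g d ≤ 1) ∧ (∃ d, g d ≠ 0) ∧
      (∀ (V : Type) [Fintype V] [DecidableEq V] (G : SimpleGraph V) [DecidableRel G.Adj],
        ∃ S : Finset V, IsStarForest (G.induce (S : Set V)) ∧
          ∑ v, (fS ε (G.degree v) + g (G.degree v)) ≤ (S.card : ℝ)) := by
  rintro ⟨g, hg, ⟨d₀, hd₀⟩, hmain⟩
  have hgnn : ∀ d, 0 ≤ g d := fun d => (hg d).1
  have hfS1 : fS ε 1 = 1 - ε := by simp [fS]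
  -- consequence of the pendant-clique graph PC d, when fS ε d = 1/d + ε
  have hPC : ∀ d : ℕ, 2 ≤ d → fS ε d = 1 / (d : ℝ) + ε → g 1 = 0 ∧ g d = 0 := by
    intro d hd2 hfd
    obtain ⟨S, hSF, hsum⟩ := hmain (Fin d × Bool) (PC d)
    have hcard : S.card ≤ d + 1 := PC_bound S hSF
    have hsum' : ∑ v : Fin d × Bool, (fS ε ((PC d).degree v) + g ((PC d).degree v))
        = d * ((fS ε 1 + g 1) + (fS ε d + g d)) := by
      rw [Fintype.sum_prod_type]
      simp only [Fintype.sum_bool, PC_degree_pendant, PC_degree_clique]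
      rw [Finset.sum_const, card_univ, Fintype.card_fin, nsmul_eq_mul]
    rw [hsum', hfS1, hfd] at hsum
    have hdR : (2:ℝ) ≤ (d : ℝ) := by exact_mod_cast hd2
    have hcardR : (S.card : ℝ) ≤ (d : ℝ) + 1 := by exact_mod_cast hcard
    have hinv : (d:ℝ) * (1/(d:ℝ)) = 1 := by
      field_simp
    have hmul : (d:ℝ) * (g 1 + g d) ≤ 0 := by nlinarith [hsum, hcardR, hinv]
    have hsle : g 1 + g d ≤ 0 := by
      nlinarith [mul_nonneg (by linarith : (0:ℝ) ≤ (d:ℝ) - 2)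
        (by linarith [hgnn 1, hgnn d] : (0:ℝ) ≤ g 1 + g d)]
    exact ⟨le_antisymm (by linarith [hgnn d]) (hgnn 1),
      le_antisymm (by linarith [hgnn 1]) (hgnn d)⟩
  -- g 1 = 0 and g 3 = 0, using PC 3
  have h13 : g 1 = 0 ∧ g 3 = 0 := by
    refine hPC 3 (by norm_num) ?_
    rw [fS, if_neg (by omega), if_neg (by omega), if_neg (by omega),
      min_eq_right (by push_cast; linarith)]
  -- g 0 = 0, using a single vertex
  have h0 : g 0 = 0 := by
    obtain ⟨S, hSF, hsum⟩ := hmain (Fin 1) ⊥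
    have hcard : S.card ≤ 1 := le_trans (Finset.card_le_univ S) (by simp)
    have hs : ∑ v : Fin 1, (fS ε ((⊥ : SimpleGraph (Fin 1)).degree v)
        + g ((⊥ : SimpleGraph (Fin 1)).degree v)) = 1 + g 0 := by
      simp [SimpleGraph.bot_degree, fS]
    rw [hs] at hsum
    have hcardR : (S.card : ℝ) ≤ 1 := by exact_mod_cast hcard
    linarith [hgnn 0]
  -- g 2 = 0
  have h2 : g 2 = 0 := by
    rcases le_total ((1:ℝ)/2 + ε) (3/5 : ℝ) with hc | hc
    · refine (hPC 2 (le_refl 2) ?_).2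
      rw [fS, if_neg (by omega), if_neg (by omega), if_pos rfl, min_eq_right (by linarith)]
      norm_num
    · obtain ⟨S, hSF, hsum⟩ := hmain (ZMod 5) C5
      have hcard := C5_bound S hSF
      have hf2 : fS ε 2 = 3/5 := by
        rw [fS, if_neg (by omega), if_neg (by omega), if_pos rfl, min_eq_left hc]
      have hs : ∑ v : ZMod 5, (fS ε (C5.degree v) + g (C5.degree v)) = 5 * (3/5 + g 2) := by
        simp only [C5_degree, hf2]
        rw [Finset.sum_const, card_univ]
        have h5 : Fintype.card (ZMod 5) = 5 := by decide
        rw [h5, nsmul_eq_mul]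
        push_cast
        ring
      rw [hs] at hsum
      have hcardR : (S.card : ℝ) ≤ 3 := by exact_mod_cast hcard
      linarith [hgnn 2]
  -- g d = 0 for d ≥ 3
  have h3 : ∀ d : ℕ, 3 ≤ d → g d = 0 := by
    intro d hd3
    have hfd : fS ε d = min (2/((d:ℝ)+1)) (1/(d:ℝ)+ε) := by
      rw [fS, if_neg (by omega), if_neg (by omega), if_neg (by omega)]
    rcases le_total ((1:ℝ)/(d:ℝ) + ε) (2/((d:ℝ)+1)) with hc | hc
    · exact (hPC d (by omega) (by rw [hfd]; exact min_eq_right hc)).2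
    · obtain ⟨S, hSF, hsum⟩ := hmain (Fin (d+1)) ⊤
      have hcard := K_bound S hSF
      have hdeg : ∀ v : Fin (d+1), (⊤ : SimpleGraph (Fin (d+1))).degree v = d := by
        intro v
        rw [SimpleGraph.complete_graph_degree]
        simp
      have hs : ∑ v : Fin (d+1), (fS ε ((⊤ : SimpleGraph (Fin (d+1))).degree v)
          + g ((⊤ : SimpleGraph (Fin (d+1))).degree v)) = ((d:ℝ)+1) * (2/((d:ℝ)+1) + g d) := by
        simp only [hdeg]
        rw [Finset.sum_const, card_univ, Fintype.card_fin, nsmul_eq_mul]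
        rw [hfd, min_eq_left hc]
        push_cast
        ring
      rw [hs] at hsum
      have hcardR : (S.card : ℝ) ≤ 2 := by exact_mod_cast hcard
      have hdR : (3:ℝ) ≤ (d:ℝ) := by exact_mod_cast hd3
      have h2' : ((d:ℝ)+1) * (2/((d:ℝ)+1)) = 2 := by field_simp
      have hmul : ((d:ℝ)+1) * g d ≤ 0 := by nlinarith [hsum, hcardR, h2']
      nlinarith [hgnn d, mul_nonneg (by linarith : (0:ℝ) ≤ (d:ℝ) + 1) (hgnn d)]
  have hall : ∀ d, g d = 0 := by
    intro d
    match d with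
    | 0 => exact h0
    | 1 => exact h13.1
    | 2 => exact h2
    | (n+3) => exact h3 (n+3) (by omega)
  exact hd₀ (hall d₀)
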